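/- arXiv:2111.01849 — 2 statements merged into one kernel-verified Lean document; each statement's English description precedes it below -/
import Mathlib

section
/- Let n ≥ 2 and consider a directed n-cycle whose edge weights g_1,…,g_n are nonzero and whose loop product P satisfies 1-P ≠ 0. Suppose a second cycle matrix G' with edge weights g'_1,…,g'_n, loop product P', 1-P' ≠ 0, satisfies (I-G)^{-1}_{ik} = (I-G')^{-1}_{ik} for all i, k in {1,…,n} (full excitation and measurement). Then g_i = g'_i for all i. -/
/-!
Going once around the cycle multiplies by the loop product, so `G ^ n = P • 1` and the
geometric series `∑_{k<n} G^k` shows that `1 - G` is invertible when `1 - P ≠ 0`. An invertible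
matrix is determined by its inverse (a singular one has junk inverse `0`), so `T` determines
`G`, whose subdiagonal lists the `g i`.
-/

/-- The `n × n` network matrix of a directed `n`-cycle: entry `(i+1 mod n, i)` is `g i`. -/
def cycleMatrix {K : Type*} [Field K] {n : ℕ} [NeZero n] (g : Fin n → K) :
    Matrix (Fin n) (Fin n) K :=
  Matrix.of fun i j => if i = j + 1 then g j else 0

open Finset Fin.NatCast

section

variable {K : Type*} [Field K] {n : ℕ} [NeZero n]

lemma cycleMatrix_pow_apply (g : Fin n → K) (k : ℕ) (a b : Fin n) :
    (cycleMatrix g ^ k) a b = if a = b + k then ∏ j ∈ range k, g (b + j) else 0 := by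
  induction k generalizing b with
  | zero => simp [Matrix.one_apply]
  | succ k ih =>
    have hcol : ∀ c, cycleMatrix g c b = if c = b + 1 then g b else 0 := fun _ => rfl
    simp only [pow_succ, Matrix.mul_apply, hcol, mul_ite, mul_zero, sum_ite_eq', mem_univ,
      if_true, ih, ite_mul, zero_mul, prod_range_succ', Nat.cast_add, Nat.cast_one, Nat.cast_zero,
      add_zero, add_assoc, add_comm (1 : Fin n)]

lemma cycleMatrix_pow_card (g : Fin n → K) :
    cycleMatrix g ^ n = (∏ i, g i) • (1 : Matrix (Fin n) (Fin n) K) := by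
  ext a b
  rw [cycleMatrix_pow_apply, Fin.natCast_self, add_zero, Matrix.smul_apply, Matrix.one_apply,
    ← Fin.prod_univ_eq_prod_range (fun j => g (b + j)), smul_eq_mul, mul_ite, mul_one, mul_zero]
  congr 1
  exact Fintype.prod_equiv (Equiv.addLeft b) _ _ fun j => by simp

lemma isUnit_det_one_sub_cycleMatrix (g : Fin n → K) (hP : 1 - ∏ i, g i ≠ 0) :
    IsUnit (1 - cycleMatrix g).det := by
  have hgeom : (1 - cycleMatrix g) * ∑ k ∈ range n, cycleMatrix g ^ k = (1 - ∏ i, g i) • 1 := by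
    rw [mul_neg_geom_sum, cycleMatrix_pow_card, sub_smul, one_smul]
  refine isUnit_iff_ne_zero.mpr <| Matrix.det_ne_zero_of_right_inverse
    (B := (1 - ∏ i, g i)⁻¹ • ∑ k ∈ range n, cycleMatrix g ^ k) ?_
  rw [Matrix.mul_smul, hgeom, smul_smul, inv_mul_cancel₀ hP, one_smul]

lemma cycleMatrix_injective : Function.Injective (cycleMatrix : (Fin n → K) → _) := by
  intro g g' h
  funext i
  simpa [cycleMatrix] using congrFun (congrFun h (i + 1)) i

end

theorem full_EMP_identifies_cycle_general {K : Type*} [Field K] {n : ℕ} [NeZero n]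
    (g g' : Fin n → K)
    (hP : 1 - ∏ i, g i ≠ 0)
    (hT : ∀ i k : Fin n, (1 - cycleMatrix g)⁻¹ i k = (1 - cycleMatrix g')⁻¹ i k) :
    ∀ i, g i = g' i := by
  have hsub : 1 - cycleMatrix g = 1 - cycleMatrix g' :=
    Matrix.inv_inj (Matrix.ext hT) (isUnit_det_one_sub_cycleMatrix g hP)
  exact congrFun (cycleMatrix_injective (sub_right_injective hsub))

/-- Full excitation and measurement identifies the cycle: if two cycle matrices with
nonzero edge weights and well-posed loops have the same closed-loop matrix
`T = (I-G)⁻¹` entrywise, then their edge weights coincide. -/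
theorem full_EMP_identifies_cycle {K : Type*} [Field K] {n : ℕ} [NeZero n] (hn : 2 ≤ n)
    (g g' : Fin n → K) (hg : ∀ i, g i ≠ 0) (hg' : ∀ i, g' i ≠ 0)
    (hP : 1 - ∏ i, g i ≠ 0) (hP' : 1 - ∏ i, g' i ≠ 0)
    (hT : ∀ i k : Fin n, (1 - cycleMatrix g)⁻¹ i k = (1 - cycleMatrix g')⁻¹ i k) :
    ∀ i, g i = g' i :=
  full_EMP_identifies_cycle_general g g' hP hT
end

section
/- In a directed n-cycle with nonzero edge weights and 1-P ≠ 0, suppose the EMP has B ∩ C ≠ ∅, say node 1 is both excited and measured, and B ∪ C = {1,…,n}. Then the observed entries {T_{i1} : i ∈ C} and {T_{1j} : j ∈ B} of T = (I-G)^{-1} uniquely determine all edge weights g_1,…,g_n. In particular T_{11} = 1/(1-P) determines P, and each g_i is then recovered recursively as a ratio of observed T entries and previously recovered weights. -/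
open Finset

section

open Fin.CommRing

namespace Fin

variable {n : ℕ}

lemma val_sub_add_val_sub_of_ne {i j : Fin n} (h : i ≠ j) : (i - j).val + (j - i).val = n := by
  rcases lt_or_gt_of_ne h with hij | hji
  · rw [coe_sub_iff_lt.2 hij, coe_sub_iff_le.2 hij.le]; omega
  · rw [coe_sub_iff_lt.2 hji, coe_sub_iff_le.2 hji.le]; omega

variable [NeZero n]

lemma val_add_one_of_add_one_ne_zero {i : Fin n} (h : i + 1 ≠ 0) : (i + 1).val = i.val + 1 := by
  obtain ⟨m, rfl⟩ := Nat.exists_eq_add_one_of_ne_zero (NeZero.ne n)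
  rw [Fin.val_add_one, if_neg]
  rintro rfl
  simp at h

lemma val_neg_one_eq_sub_one : (-1 : Fin n).val = n - 1 := by
  obtain ⟨m, rfl⟩ := Nat.exists_eq_add_one_of_ne_zero (NeZero.ne n)
  simp

end Fin

lemma prod_range_comp_add_left {M : Type*} [CommMonoid M] {n : ℕ} [NeZero n] (g : Fin n → M)
    (j : Fin n) : ∏ k ∈ range n, g (j + (k : Fin n)) = ∏ k, g k := by
  rw [← Fin.prod_univ_eq_prod_range (fun k => g (j + (k : Fin n)))]
  simpa using Fintype.prod_equiv (Equiv.addLeft j) _ _ fun _ => rfl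

variable {K : Type*} [Field K] {n : ℕ} [NeZero n]

def cyclePathProd (g : Fin n → K) (i j : Fin n) : K :=
  ∏ k ∈ range (i - j).val, g (j + (k : Fin n))

variable {g g' : Fin n → K}

@[simp]
lemma cyclePathProd_self (g : Fin n → K) (i : Fin n) : cyclePathProd g i i = 1 := by
  simp [cyclePathProd]

lemma cyclePathProd_ne_zero (hg : ∀ i, g i ≠ 0) (i j : Fin n) : cyclePathProd g i j ≠ 0 :=
  prod_ne_zero_iff.2 fun _ _ => hg _

lemma cyclePathProd_add_one {i j : Fin n} (h : i + 1 ≠ j) :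
    cyclePathProd g (i + 1) j = g i * cyclePathProd g i j := by
  have hval : (i + 1 - j).val = (i - j).val + 1 := by
    rw [add_sub_right_comm, Fin.val_add_one_of_add_one_ne_zero]
    rwa [← add_sub_right_comm, sub_ne_zero]
  rw [cyclePathProd, cyclePathProd, hval, prod_range_succ, Fin.cast_val_eq_self,
    add_sub_cancel, mul_comm]

lemma mul_cyclePathProd_add_one_self (g : Fin n → K) (i : Fin n) :
    g i * cyclePathProd g i (i + 1) = ∏ k, g k := by
  have hrange : range n = range ((i - (i + 1)).val + 1) := by
    rw [sub_add_cancel_left, Fin.val_neg_one_eq_sub_one, Nat.sub_add_cancel (Nat.pos_of_neZero n)]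
  rw [cyclePathProd, ← prod_range_comp_add_left g i, hrange, prod_range_succ', Nat.cast_zero,
    add_zero, mul_comm]
  exact congrArg (· * g i) <| prod_congr rfl fun k _ => by
    rw [Nat.cast_succ, add_comm (k : Fin n), add_assoc]

lemma cyclePathProd_mul_cyclePathProd {i j : Fin n} (h : i ≠ j) :
    cyclePathProd g i j * cyclePathProd g j i = ∏ k, g k := by
  have hshift : ∀ k : ℕ, i + (k : Fin n) = j + (((i - j).val + k : ℕ) : Fin n) := fun k => by
    rw [Nat.cast_add, Fin.cast_val_eq_self, ← add_assoc, add_sub_cancel]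
  rw [cyclePathProd, cyclePathProd, prod_congr rfl fun k _ => congrArg g (hshift k),
    ← prod_range_add (fun k => g (j + (k : Fin n))), Fin.val_sub_add_val_sub_of_ne h,
    prod_range_comp_add_left]

lemma cycleMatrix_mul_apply (g : Fin n → K) (M : Matrix (Fin n) (Fin n) K) (i j : Fin n) :
    (cycleMatrix g * M) (i + 1) j = g i * M i j := by
  simp only [cycleMatrix, Matrix.mul_apply, Matrix.of_apply, ite_mul, zero_mul, add_left_inj,
    sum_ite_eq, mem_univ, if_true]

lemma one_sub_cycleMatrix_mul_cyclePathProd (g : Fin n → K) :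
    (1 - cycleMatrix g) * Matrix.of (cyclePathProd g) = (1 - ∏ k, g k) • 1 := by
  ext i j
  obtain ⟨i, rfl⟩ : ∃ k, i = k + 1 := ⟨i - 1, (sub_add_cancel i 1).symm⟩
  rw [sub_mul, one_mul, Matrix.sub_apply, cycleMatrix_mul_apply, Matrix.smul_apply,
    Matrix.one_apply, Matrix.of_apply, Matrix.of_apply]
  by_cases h : i + 1 = j
  · subst h
    simp [mul_cyclePathProd_add_one_self]
  · simp [cyclePathProd_add_one h, h]

lemma inv_one_sub_cycleMatrix_apply (hP : 1 - ∏ k, g k ≠ 0) (i j : Fin n) :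
    (1 - cycleMatrix g)⁻¹ i j = cyclePathProd g i j / (1 - ∏ k, g k) := by
  have hinv : (1 - cycleMatrix g)⁻¹ = (1 - ∏ k, g k)⁻¹ • Matrix.of (cyclePathProd g) := by
    apply Matrix.inv_eq_right_inv
    rw [Matrix.mul_smul, one_sub_cycleMatrix_mul_cyclePathProd, smul_smul, inv_mul_cancel₀ hP,
      one_smul]
  rw [hinv, Matrix.smul_apply, Matrix.of_apply, smul_eq_mul, inv_mul_eq_div]

lemma cyclePathProd_eq_of_swap_eq (hg : ∀ i, g i ≠ 0) (hP : ∏ k, g k = ∏ k, g' k)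
    {i j : Fin n} (h : cyclePathProd g j i = cyclePathProd g' j i) :
    cyclePathProd g i j = cyclePathProd g' i j := by
  rcases eq_or_ne i j with rfl | hij
  · simp
  refine mul_right_cancel₀ (cyclePathProd_ne_zero hg j i) ?_
  rw [cyclePathProd_mul_cyclePathProd hij, hP, h, cyclePathProd_mul_cyclePathProd hij]

lemma eq_of_cyclePathProd_eq (hg : ∀ i, g i ≠ 0) (hP : ∏ k, g k = ∏ k, g' k) (j : Fin n)
    (h : ∀ i, cyclePathProd g i j = cyclePathProd g' i j) : g = g' := by
  funext i
  refine mul_right_cancel₀ (cyclePathProd_ne_zero hg i j) ?_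
  nth_rewrite 2 [h i]
  by_cases hij : i + 1 = j
  · subst hij
    rw [mul_cyclePathProd_add_one_self, mul_cyclePathProd_add_one_self, hP]
  · rw [← cyclePathProd_add_one hij, ← cyclePathProd_add_one hij, h]

end

theorem overlap_EMP_identifies_cycle_general {K : Type*} [Field K] {n : ℕ} [NeZero n]
    (B C : Finset (Fin n))
    (hcover : B ∪ C = Finset.univ)
    (g g' : Fin n → K) (hg : ∀ i, g i ≠ 0)
    (hP : 1 - ∏ i, g i ≠ 0) (hP' : 1 - ∏ i, g' i ≠ 0)
    (hcol : ∀ i ∈ C, (1 - cycleMatrix g)⁻¹ i 0 = (1 - cycleMatrix g')⁻¹ i 0)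
    (hrow : ∀ j ∈ B, (1 - cycleMatrix g)⁻¹ 0 j = (1 - cycleMatrix g')⁻¹ 0 j) :
    g = g' := by
  have hobs : ∀ m, (1 - cycleMatrix g)⁻¹ m 0 = (1 - cycleMatrix g')⁻¹ m 0 ∨
      (1 - cycleMatrix g)⁻¹ 0 m = (1 - cycleMatrix g')⁻¹ 0 m := fun m =>
    (mem_union.1 (hcover ▸ mem_univ m)).elim (Or.inr ∘ hrow m) (Or.inl ∘ hcol m)
  simp only [inv_one_sub_cycleMatrix_apply hP, inv_one_sub_cycleMatrix_apply hP'] at hobs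
  have hden : 1 - ∏ i, g i = 1 - ∏ i, g' i := by simpa using hobs 0
  have hprod : ∏ i, g i = ∏ i, g' i := sub_right_injective hden
  simp only [hden, div_left_inj' hP'] at hobs
  exact eq_of_cyclePathProd_eq hg hprod 0 fun m =>
    (hobs m).elim id (cyclePathProd_eq_of_swap_eq hg hprod)

/-- If node `1` (index `0`) is both excited and measured and every node is excited or
measured, then the observed entries `T_{i1}` for measured `i` and `T_{1j}` for excited
`j` of `T = (I-G)⁻¹` uniquely determine all edge weights of the cycle. -/
theorem overlap_EMP_identifies_cycle {K : Type*} [Field K] {n : ℕ} [NeZero n]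
    (hn : 2 ≤ n) (B C : Finset (Fin n))
    (h1B : (0 : Fin n) ∈ B) (h1C : (0 : Fin n) ∈ C) (hcover : B ∪ C = Finset.univ)
    (g g' : Fin n → K) (hg : ∀ i, g i ≠ 0) (hg' : ∀ i, g' i ≠ 0)
    (hP : 1 - ∏ i, g i ≠ 0) (hP' : 1 - ∏ i, g' i ≠ 0)
    (hcol : ∀ i ∈ C, (1 - cycleMatrix g)⁻¹ i 0 = (1 - cycleMatrix g')⁻¹ i 0)
    (hrow : ∀ j ∈ B, (1 - cycleMatrix g)⁻¹ 0 j = (1 - cycleMatrix g')⁻¹ 0 j) :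
    g = g' :=
  overlap_EMP_identifies_cycle_general B C hcover g g' hg hP hP' hcol hrow
end
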